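/- Let p be a prime with p ≡ 3 (mod 4), let n be an odd integer greater than 1 with (p, n) ≠ (3, 5), let d0 be the squarefree part of 1 − p^n and c the positive integer with 1 − p^n = c^2·d0 (so d0 ≡ 2 (mod 4) is the squarefree part and c^2·d0 = 1 − p^n). Then for any prime p4 dividing n, there are no integers u, v and sign ε ∈ {+1, −1} such that (u + v·√d0)^{p4} = ε·(1 + c·√d0) in ℤ[√d0]. -/

import Mathlib

/-!
Comparing norms and coordinates in `ℤ√d0` shows that `u = ±1`, that the norm of `u + v √d0` is
`X = p ^ m` with `m * p4 = n`, and that `(X ^ p4 - 1) / (X - 1) = A ^ 2` for an integer `A`.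
With `p4 = 2 q + 1`, the pair `(X ^ q, |A|)` solves `X z ^ 2 - (X - 1) y ^ 2 = 1`, whose
nonnegative solutions are `z √X + y √(X - 1) = (√X + √(X - 1)) ^ (2 k + 1)`. Expanding,
`z = ∑ C(2k+1, 2j+1) X ^ j (X - 1) ^ (k - j)`; for `p ≠ 5` the terms with `j ≥ 2` are divisible by
`p ^ (v_p(2k+1) + 2)` and the first two together are not, so `p ^ v_p(z) ≤ (2k+1) p`. Against
`z ≥ (3X) ^ k` this leaves only `k = 1`, where `z = 4X - 3` forces `X = 3`, `z = 9`, `p4 = 5`.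
-/

open Finset

theorem Finset.sum_range_two_mul {M : Type*} [AddCommMonoid M] (f : ℕ → M) (K : ℕ) :
    ∑ i ∈ range (2 * K), f i = ∑ j ∈ range K, (f (2 * j) + f (2 * j + 1)) := by
  induction K with
  | zero => simp
  | succ K ih => rw [Nat.mul_succ, sum_range_succ, sum_range_succ, sum_range_succ, ih, add_assoc]

namespace Zsqrtd

variable {d : ℤ}

theorem re_sum {ι : Type*} (s : Finset ι) (f : ι → ℤ√d) :
    (∑ i ∈ s, f i).re = ∑ i ∈ s, (f i).re :=
  map_sum (AddMonoidHom.mk' re re_add) f s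

theorem re_intCast_add_sqrtd_pow_odd (a : ℤ) (k : ℕ) :
    (((a : ℤ√d) + sqrtd) ^ (2 * k + 1)).re =
      ∑ j ∈ range (k + 1),
        ((2 * k + 1).choose (2 * j + 1) : ℤ) * a ^ (2 * j + 1) * d ^ (k - j) := by
  have hsq : (sqrtd : ℤ√d) ^ 2 = d := by rw [sq, dmuld]
  rw [add_pow, show 2 * k + 1 + 1 = 2 * (k + 1) by ring, re_sum, sum_range_two_mul]
  refine sum_congr rfl fun j hj => ?_
  have hjk : j ≤ k := Nat.lt_succ_iff.mp (mem_range.mp hj)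
  rw [show 2 * k + 1 - 2 * j = 2 * (k - j) + 1 by omega,
    show 2 * k + 1 - (2 * j + 1) = 2 * (k - j) by omega, pow_succ _ (2 * (k - j)),
    pow_mul _ 2 (k - j), hsq]
  simp only [← Int.cast_pow, ← Int.cast_natCast (R := ℤ√d), re_mul, im_mul, re_intCast,
    im_intCast, re_sqrtd, im_sqrtd]
  ring

theorem im_dvd_im_pow (z : ℤ√d) (n : ℕ) : z.im ∣ (z ^ n).im := by
  induction n with
  | zero => simp
  | succ n ih =>
    rw [pow_succ, im_mul]
    exact dvd_add (dvd_mul_left _ _) (dvd_mul_of_dvd_left ih _)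

theorem re_dvd_re_pow_of_odd (z : ℤ√d) {n : ℕ} (hn : Odd n) : z.re ∣ (z ^ n).re := by
  obtain ⟨k, rfl⟩ := hn
  have hsub : z - sqrtd * (z.im : ℤ√d) = (z.re : ℤ√d) := by ext <;> simp
  have hdvd := sub_dvd_pow_sub_pow z (sqrtd * (z.im : ℤ√d)) (2 * k + 1)
  rw [hsub, intCast_dvd] at hdvd
  have hre : ((sqrtd * (z.im : ℤ√d)) ^ (2 * k + 1)).re = 0 := by
    rw [pow_succ, pow_mul, mul_pow, sq, dmuld]
    simp only [← Int.cast_pow, ← Int.cast_mul, re_mul, im_mul, re_intCast, im_intCast, re_sqrtd,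
      im_sqrtd]
    ring
  simpa [hre] using hdvd.1

theorem norm_pow (z : ℤ√d) (n : ℕ) : (z ^ n).norm = z.norm ^ n :=
  map_pow normMonoidHom z n

theorem norm_pow_eq_of_pow_eq_sign_mul {c ε : ℤ} {q : ℕ} (z : ℤ√d) (hq : Odd q)
    (hε : ε = 1 ∨ ε = -1) (h : z ^ q = ε * ⟨1, c⟩) :
    z.norm ^ q = 1 - d * c ^ 2 ∧ ∃ A, z.norm ^ q = 1 + (z.norm - 1) * A ^ 2 := by
  have hεu : IsUnit ε := by rcases hε with rfl | rfl <;> simp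
  have hnorm : z.norm ^ q = 1 - d * c ^ 2 := by
    have hεε : ε * ε = 1 := by rcases hε with rfl | rfl <;> norm_num
    rw [← norm_pow, h, norm_mul, norm_intCast, hεε, one_mul, norm_def]
    ring
  have hre : z.re ∣ ε := by simpa [h] using z.re_dvd_re_pow_of_odd hq
  have hu : z.re ^ 2 = 1 := by
    rcases Int.isUnit_iff.mp (isUnit_of_dvd_unit hre hεu) with h1 | h1 <;> simp [h1]
  obtain ⟨A, hA⟩ : z.im ∣ c := (hεu.dvd_mul_left).mp (by simpa [h] using z.im_dvd_im_pow q)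
  refine ⟨hnorm, A, ?_⟩
  rw [hnorm, norm_def, hA]
  linear_combination (-A ^ 2) * hu

end Zsqrtd

theorem exists_eq_pow_of_pow_eq_prime_pow {p q n : ℕ} (hp : p.Prime) (hq : Odd q) {w : ℤ}
    (h : w ^ q = (p : ℤ) ^ n) : ∃ m, w = (p : ℤ) ^ m ∧ n = m * q := by
  have hw : 0 < w := hq.pow_pos_iff.mp (h ▸ pow_pos (by exact_mod_cast hp.pos) n)
  lift w to ℕ using hw.le
  have h' : w ^ q = p ^ n := by exact_mod_cast h
  obtain ⟨m, -, rfl⟩ :=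
    (Nat.dvd_prime_pow hp).mp (h' ▸ dvd_pow_self w (by rintro rfl; simp at hq))
  exact ⟨m, by push_cast; rfl, Nat.pow_right_injective hp.two_le (by simp only [pow_mul, h'])⟩

/-- `(pellSol x k).1 * √x + (pellSol x k).2 * √(x - 1) = (√x + √(x - 1)) ^ (2 * k + 1)`. -/
def pellSol (x : ℤ) : ℕ → ℤ × ℤ
  | 0 => (1, 1)
  | k + 1 => ((2 * x - 1) * (pellSol x k).1 + 2 * (x - 1) * (pellSol x k).2,
      2 * x * (pellSol x k).1 + (2 * x - 1) * (pellSol x k).2)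

theorem pellSol_one_fst (x : ℤ) : (pellSol x 1).1 = 4 * x - 3 := by
  simp only [pellSol]; ring

theorem pellSol_pos_and_fst_le_snd {x : ℤ} (hx : 1 ≤ x) (k : ℕ) :
    0 < (pellSol x k).1 ∧ (pellSol x k).1 ≤ (pellSol x k).2 := by
  induction k with
  | zero => simp [pellSol]
  | succ k ih =>
    simp only [pellSol]
    constructor <;> nlinarith [ih.1, ih.2]

theorem three_mul_pow_le_pellSol_fst {x : ℤ} (hx : 3 ≤ x) (k : ℕ) :
    (3 * x) ^ k ≤ (pellSol x k).1 := by
  induction k with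
  | zero => simp [pellSol]
  | succ k ih =>
    obtain ⟨hpos, hle⟩ := pellSol_pos_and_fst_le_snd (by omega : 1 ≤ x) k
    simp only [pellSol, pow_succ]
    nlinarith

/-- `√x * (√x + √(x - 1)) = x + √(x(x - 1))`, so the odd powers of `x + √(x(x - 1))` carry the
Pell solutions. -/
theorem mk_pow_eq_pellSol (x : ℤ) (k : ℕ) :
    (⟨x, 1⟩ : ℤ√(x * (x - 1))) ^ (2 * k + 1) =
      ⟨x ^ (k + 1) * (pellSol x k).1, x ^ k * (pellSol x k).2⟩ := by
  induction k with
  | zero => simp [pellSol]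
  | succ k ih =>
    rw [show 2 * (k + 1) + 1 = 2 * k + 1 + 2 by ring, pow_add, ih]
    ext <;> simp [pellSol, sq, Zsqrtd.re_mul, Zsqrtd.im_mul] <;> ring

theorem pellSol_fst_eq_sum {x : ℤ} (hx : x ≠ 0) (k : ℕ) :
    (pellSol x k).1 =
      ∑ j ∈ range (k + 1), ((2 * k + 1).choose (2 * j + 1) : ℤ) * x ^ j * (x - 1) ^ (k - j) := by
  have h := Zsqrtd.re_intCast_add_sqrtd_pow_odd (d := x * (x - 1)) x k
  rw [show (x : ℤ√(x * (x - 1))) + Zsqrtd.sqrtd = ⟨x, 1⟩ by ext <;> simp, mk_pow_eq_pellSol] at h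
  refine mul_left_cancel₀ (pow_ne_zero (k + 1) hx) (h.trans ?_)
  rw [mul_sum]
  refine sum_congr rfl fun j hj => ?_
  obtain ⟨i, rfl⟩ := Nat.exists_eq_add_of_le (Nat.lt_succ_iff.mp (mem_range.mp hj))
  rw [Nat.add_sub_cancel_left, mul_pow]
  ring

/-- Dividing `z √x + y √(x - 1)` by `(√x + √(x - 1)) ^ 2` gives a smaller solution. -/
theorem pell_descent {x z y : ℤ} (hx : 3 ≤ x) (hz : 0 ≤ z) (hy : 2 ≤ y)
    (h : x * z ^ 2 = 1 + (x - 1) * y ^ 2) :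
    ∃ z' y', 0 ≤ z' ∧ 0 ≤ y' ∧ y' < y ∧ x * z' ^ 2 = 1 + (x - 1) * y' ^ 2 ∧
      z = (2 * x - 1) * z' + 2 * (x - 1) * y' ∧ y = 2 * x * z' + (2 * x - 1) * y' := by
  have hzy : z < y := lt_of_pow_lt_pow_left₀ 2 (by omega) (by nlinarith)
  -- `y ^ 2 ≤ 4 * x` would force `(y, z) = (2, 1)` and then `x = 1`
  have h4x : 4 * x < y ^ 2 := by
    by_contra! hle
    have : (y - z) * (y + z) ≤ 3 := by nlinarith
    have hy2 : y = 2 := by nlinarith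
    have hz1 : z = 1 := by nlinarith
    subst hy2 hz1
    omega
  refine ⟨(2 * x - 1) * z - 2 * (x - 1) * y, (2 * x - 1) * y - 2 * x * z, ?_, ?_, ?_,
    by linear_combination h, by ring, by ring⟩
  · have : 2 * (x - 1) * y < (2 * x - 1) * z :=
      lt_of_pow_lt_pow_left₀ 2 (by nlinarith) (by nlinarith)
    omega
  · have : 2 * x * z < (2 * x - 1) * y :=
      lt_of_pow_lt_pow_left₀ 2 (by nlinarith) (by nlinarith)
    omega
  · have : (x - 1) * y < x * z := lt_of_pow_lt_pow_left₀ 2 (by nlinarith) (by nlinarith)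
    linarith

theorem exists_pellSol_eq {x z y : ℤ} (hx : 3 ≤ x) (hz : 0 ≤ z) (hy : 0 ≤ y)
    (h : x * z ^ 2 = 1 + (x - 1) * y ^ 2) : ∃ k, pellSol x k = (z, y) := by
  lift y to ℕ using hy
  induction y using Nat.strong_induction_on generalizing z with
  | _ y ih =>
    rcases (show y = 0 ∨ y = 1 ∨ 2 ≤ y by omega) with rfl | rfl | hy2
    · have h1 : x * z ^ 2 = 1 := by simpa using h
      have := Int.eq_one_of_mul_eq_one_right (by omega) h1
      omega
    · have hz2 : z ^ 2 = 1 := mul_left_cancel₀ (by omega : x ≠ 0) (by push_cast at h; linarith)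
      have : z = 1 := by nlinarith
      exact ⟨0, by simp [pellSol, this]⟩
    · obtain ⟨z', y', hz', hy', hlt, h', hz_eq, hy_eq⟩ :=
        pell_descent hx hz (by exact_mod_cast hy2) h
      lift y' to ℕ using hy'
      obtain ⟨k, hk⟩ := ih y' (by exact_mod_cast hlt) hz' h'
      exact ⟨k + 1, by simp [pellSol, hk, hz_eq, hy_eq]⟩

namespace Nat

theorem two_mul_add_five_le_three_pow {i : ℕ} (hi : 2 ≤ i) : 2 * i + 5 ≤ 3 ^ i := by
  induction i, hi using Nat.le_induction with
  | base => norm_num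
  | succ i _ ih => rw [pow_succ]; omega

theorem factorization_le_factorization_add_factorization_choose {n r : ℕ} (p : ℕ) (hr : 0 < r)
    (hrn : r ≤ n) : n.factorization p ≤ r.factorization p + (n.choose r).factorization p := by
  obtain ⟨n, rfl⟩ := Nat.exists_eq_add_of_le' (hr.trans_le hrn)
  obtain ⟨r, rfl⟩ := Nat.exists_eq_add_of_le' hr
  have hC : (n + 1).choose (r + 1) ≠ 0 := (Nat.choose_pos hrn).ne'
  have hdvd : n + 1 ∣ (r + 1) * (n + 1).choose (r + 1) :=
    ⟨n.choose r, by rw [Nat.add_one_mul_choose_eq, mul_comm]⟩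
  have := (Nat.factorization_le_iff_dvd (by omega) (by positivity)).mpr hdvd p
  rwa [Nat.factorization_mul (by omega) hC] at this

theorem factorization_two_mul_add_one_add_two_le {p j : ℕ} (hp5 : p ≠ 5) (hj : 2 ≤ j) :
    (2 * j + 1).factorization p + 2 ≤ j := by
  set w := (2 * j + 1).factorization p
  rcases Nat.eq_zero_or_pos w with h0 | hw0
  · omega
  have hp : p.Prime := Nat.prime_of_mem_primeFactors (Finsupp.mem_support_iff.mpr hw0.ne')
  have hdvd : p ^ w ∣ 2 * j + 1 := Nat.ordProj_dvd _ _
  have hpd : p ∣ 2 * j + 1 := (dvd_pow_self p hw0.ne').trans hdvd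
  have hp3 : 3 ≤ p := by
    have : p ≠ 2 := by rintro rfl; omega
    have := hp.two_le
    omega
  rcases (show w = 1 ∨ 2 ≤ w by omega) with h1 | h2
  · have h5 : 2 * j + 1 ≠ 5 := fun h5 =>
      hp5 ((Nat.prime_dvd_prime_iff_eq hp Nat.prime_five).mp (h5 ▸ hpd))
    have := Nat.le_of_dvd (by omega) hpd
    omega
  · have := Nat.le_of_dvd (by omega) hdvd
    have := Nat.pow_le_pow_left hp3 w
    have := two_mul_add_five_le_three_pow h2
    omega

theorem three_mul_choose_three (K : ℕ) :
    3 * (2 * K + 3).choose 3 = (2 * K + 3) * ((K + 1) * (2 * K + 1)) := by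
  have h := Nat.add_one_mul_choose_eq (2 * K + 2) 2
  have h2 : (2 * K + 2).choose 2 = (K + 1) * (2 * K + 1) := by
    rw [Nat.choose_two_right, show 2 * K + 2 - 1 = 2 * K + 1 by omega,
      show (2 * K + 2) * (2 * K + 1) = (K + 1) * (2 * K + 1) * 2 by ring,
      Nat.mul_div_cancel _ two_pos]
  rw [h2] at h
  linarith

end Nat

section PAdic

variable {p m : ℕ}

theorem pow_factorization_add_two_dvd_choose_mul_pow (hp5 : p ≠ 5) (hm : 1 ≤ m) {n j : ℕ}
    (hj : 2 ≤ j) (hjn : 2 * j + 1 ≤ n) :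
    p ^ (n.factorization p + 2) ∣ n.choose (2 * j + 1) * (p ^ m) ^ j := by
  have h1 := Nat.factorization_le_factorization_add_factorization_choose p (by omega) hjn
  have h2 := Nat.factorization_two_mul_add_one_add_two_le hp5 hj
  have hjm : j ≤ m * j := Nat.le_mul_of_pos_left j hm
  rw [← pow_mul]
  exact (pow_dvd_pow p (by omega)).trans
    (pow_add p _ _ ▸ mul_dvd_mul (Nat.ordProj_dvd _ p) dvd_rfl)

theorem not_pow_factorization_three_add_two_dvd (hp : p.Prime) (hm : 1 ≤ m) (K : ℕ) :
    ¬ p ^ ((3 : ℕ).factorization p + 2) ∣ 3 * (p ^ m - 1) + (K + 1) * (2 * K + 1) * p ^ m := by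
  set V := 3 * (p ^ m - 1) + (K + 1) * (2 * K + 1) * p ^ m
  have hV : V + 3 = p ^ m * (3 + (K + 1) * (2 * K + 1)) := by
    have : p ^ m - 1 + 1 = p ^ m := Nat.sub_add_cancel (Nat.one_le_pow _ _ hp.pos)
    calc V + 3 = 3 * (p ^ m - 1 + 1) + (K + 1) * (2 * K + 1) * p ^ m := by ring
      _ = _ := by rw [this]; ring
  rcases eq_or_ne p 3 with rfl | hp3
  · rw [Nat.Prime.factorization_self Nat.prime_three]
    rcases (show m = 1 ∨ 2 ≤ m by omega) with rfl | hm2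
    · intro h
      have h27 := (ZMod.natCast_eq_zero_iff V 27).mpr h
      simp only [V, pow_one] at h27
      push_cast at h27
      generalize (K : ZMod 27) = t at h27
      revert t
      decide
    · -- `9 ∣ 3 ^ m`, so `V ≡ -3 (mod 9)`
      intro h
      have h9 : 9 ∣ V + 3 := (Dvd.dvd.mul_right (pow_dvd_pow 3 hm2) _).trans hV.symm.dvd
      have := (Nat.dvd_add_right ((pow_dvd_pow 3 (by norm_num : 2 ≤ 1 + 2)).trans h)).mp h9
      omega
  · rw [Nat.factorization_eq_zero_of_not_dvd (fun h => hp3 ((Nat.prime_dvd_prime_iff_eq hp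
      Nat.prime_three).mp h)), zero_add]
    intro h
    have hpV : p ∣ V + 3 := (Dvd.dvd.mul_right (dvd_pow_self p (by omega)) _).trans hV.symm.dvd
    have := (Nat.dvd_add_right ((dvd_pow_self p two_ne_zero).trans h)).mp hpV
    exact hp3 ((Nat.prime_dvd_prime_iff_eq hp Nat.prime_three).mp this)

theorem not_pow_factorization_add_two_dvd_choose_one_add_choose_three (hp : p.Prime) (hm : 1 ≤ m)
    (K : ℕ) : ¬ p ^ ((2 * K + 3).factorization p + 2) ∣
      (2 * K + 3) * (p ^ m - 1) + (2 * K + 3).choose 3 * p ^ m := by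
  set W := (2 * K + 3) * (p ^ m - 1) + (2 * K + 3).choose 3 * p ^ m
  set V := 3 * (p ^ m - 1) + (K + 1) * (2 * K + 1) * p ^ m
  have h3W : 3 * W = (2 * K + 3) * V := by
    calc 3 * W = (2 * K + 3) * (3 * (p ^ m - 1)) + 3 * (2 * K + 3).choose 3 * p ^ m := by ring
      _ = _ := by rw [Nat.three_mul_choose_three]; ring
  have hV0 : V ≠ 0 := (Nat.add_pos_right _ (Nat.mul_pos (by positivity) (pow_pos hp.pos m))).ne'
  have hW0 : W ≠ 0 := by
    rintro hW
    rw [hW, mul_zero] at h3W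
    exact mul_ne_zero (by omega) hV0 h3W.symm
  have hfac := congrArg (fun n => n.factorization p) h3W
  simp only [Nat.factorization_mul three_ne_zero hW0,
    Nat.factorization_mul (by omega : 2 * K + 3 ≠ 0) hV0, Finsupp.add_apply] at hfac
  rw [hp.pow_dvd_iff_le_factorization hW0]
  intro hW
  apply not_pow_factorization_three_add_two_dvd hp hm K
  rw [hp.pow_dvd_iff_le_factorization hV0]
  omega

theorem not_pow_factorization_add_two_dvd_sum (hp : p.Prime) (hp5 : p ≠ 5) (hm : 1 ≤ m) {k : ℕ}
    (hk : 1 ≤ k) : ¬ p ^ ((2 * k + 1).factorization p + 2) ∣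
      ∑ j ∈ range (k + 1),
        (2 * k + 1).choose (2 * j + 1) * (p ^ m) ^ j * (p ^ m - 1) ^ (k - j) := by
  obtain ⟨K, rfl⟩ := Nat.exists_eq_add_of_le' hk
  rw [show 2 * (K + 1) + 1 = 2 * K + 3 by ring]
  set f : ℕ → ℕ := fun j => (2 * K + 3).choose (2 * j + 1) * (p ^ m) ^ j * (p ^ m - 1) ^ (K + 1 - j)
    with hf
  rw [sum_range_succ', sum_range_succ', add_assoc]
  have hrest : p ^ ((2 * K + 3).factorization p + 2) ∣ ∑ j ∈ range K, f (j + 1 + 1) :=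
    dvd_sum fun j hj => (pow_factorization_add_two_dvd_choose_mul_pow hp5 hm (by omega)
      (by have := mem_range.mp hj; omega)).mul_right _
  have hlow : f (0 + 1) + f 0 =
      (p ^ m - 1) ^ K * ((2 * K + 3) * (p ^ m - 1) + (2 * K + 3).choose 3 * p ^ m) := by
    simp only [hf, mul_zero, zero_add, mul_one, pow_zero, pow_one, Nat.choose_one_right,
      Nat.add_sub_cancel, Nat.sub_zero]
    ring
  have hcop : Nat.Coprime (p ^ ((2 * K + 3).factorization p + 2)) ((p ^ m - 1) ^ K) := by
    refine Nat.Coprime.pow _ _ ((Nat.Prime.coprime_iff_not_dvd hp).mpr fun h => hp.not_dvd_one ?_)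
    have := Nat.dvd_sub (dvd_pow_self p (by omega : m ≠ 0)) h
    rwa [Nat.sub_sub_self (Nat.one_le_pow _ _ hp.pos)] at this
  rw [Nat.dvd_add_right hrest, hlow]
  exact fun h => not_pow_factorization_add_two_dvd_choose_one_add_choose_three hp hm K
    (hcop.dvd_of_dvd_mul_left h)

end PAdic

theorem eq_three_of_pellSol_fst_eq_prime_pow {p m E k : ℕ} (hp : p.Prime) (hp3 : 3 ≤ p)
    (hp5 : p ≠ 5) (hm : 1 ≤ m) (hE : 1 ≤ E) (h : (pellSol ((p : ℤ) ^ m) k).1 = (p : ℤ) ^ E) :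
    p = 3 ∧ m = 1 ∧ E = 2 := by
  have hpx : p ≤ p ^ m := Nat.le_self_pow (by omega) p
  have hpE : p ≤ p ^ E := Nat.le_self_pow (by omega) p
  rcases Nat.eq_zero_or_pos k with rfl | hk
  · have : (p : ℤ) ^ E = 1 := by simpa [pellSol] using h.symm
    have : p ^ E = 1 := by exact_mod_cast this
    omega
  have hsum : ∑ j ∈ range (k + 1),
      (2 * k + 1).choose (2 * j + 1) * (p ^ m) ^ j * (p ^ m - 1) ^ (k - j) = p ^ E := by
    have hx0 : (p : ℤ) ^ m ≠ 0 := pow_ne_zero m (by exact_mod_cast hp.ne_zero)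
    rw [← Nat.cast_inj (R := ℤ)]
    push_cast [Nat.cast_sub (Nat.one_le_pow m p hp.pos)]
    rw [← h, pellSol_fst_eq_sum hx0]
  have hEa : E ≤ (2 * k + 1).factorization p + 1 := by
    by_contra! hlt
    exact not_pow_factorization_add_two_dvd_sum hp hp5 hm hk (hsum ▸ pow_dvd_pow p hlt)
  have hbound : p ^ E ≤ (2 * k + 1) * p ^ m :=
    calc p ^ E ≤ p ^ ((2 * k + 1).factorization p) * p :=
          pow_succ p _ ▸ Nat.pow_le_pow_right hp.pos hEa
      _ ≤ (2 * k + 1) * p ^ m := Nat.mul_le_mul (Nat.ordProj_le p (by omega)) hpx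
  rcases (show k = 1 ∨ 2 ≤ k by omega) with rfl | hk2
  · have h1 : 4 * p ^ m = p ^ E + 3 := by
      have := pellSol_one_fst ((p : ℤ) ^ m)
      rw [h] at this
      exact_mod_cast (by linarith : (4 * p ^ m : ℤ) = p ^ E + 3)
    have hx3 : p ^ m = 3 := by omega
    obtain rfl : p = 3 := by omega
    obtain rfl : m = 1 :=
      Nat.pow_right_injective (by norm_num : 2 ≤ 3) (hx3.trans (pow_one 3).symm)
    exact ⟨rfl, rfl, Nat.pow_right_injective (by norm_num : 2 ≤ 3) (by omega : 3 ^ E = 3 ^ 2)⟩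
  · have hgrowth : 3 ^ k * p ^ m ≤ (3 * p ^ m) ^ k :=
      mul_pow 3 (p ^ m) k ▸ Nat.mul_le_mul_left _ (Nat.le_self_pow (by omega) _)
    have hz := three_mul_pow_le_pellSol_fst (x := (p : ℤ) ^ m) (by exact_mod_cast hp3.trans hpx) k
    rw [h] at hz
    have hz' : (3 * p ^ m) ^ k ≤ p ^ E := by exact_mod_cast hz
    have h3k : 3 ^ k ≤ 2 * k + 1 :=
      Nat.le_of_mul_le_mul_right (hgrowth.trans (hz'.trans hbound)) (pow_pos hp.pos m)
    have := Nat.two_mul_add_five_le_three_pow hk2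
    omega

theorem stmt_12_general (p : ℕ) (hp : p.Prime) (hmod : p % 4 = 3)
    (n : ℕ) (hodd : Odd n) (hpn : (p, n) ≠ (3, 5))
    (d0 : ℤ) (c : ℤ)
    (hfac : (1 : ℤ) - (p : ℤ) ^ n = c ^ 2 * d0)
    (p4 : ℕ) (hp4 : p4.Prime) (hdvd : p4 ∣ n) :
    ¬ ∃ (u v ε : ℤ), (ε = 1 ∨ ε = -1) ∧
      (⟨u, v⟩ : ℤ√d0) ^ p4 = (ε : ℤ√d0) * ⟨1, c⟩ := by
  rintro ⟨u, v, ε, hε, h⟩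
  have hq : Odd p4 := hodd.of_dvd_nat hdvd
  obtain ⟨hnorm, A, hA⟩ := Zsqrtd.norm_pow_eq_of_pow_eq_sign_mul _ hq hε h
  obtain ⟨m, hX, rfl⟩ :=
    exists_eq_pow_of_pow_eq_prime_pow hp hq (hnorm.trans (by linear_combination hfac))
  rw [hX] at hA
  obtain ⟨qq, rfl⟩ := hq
  have hqq : 1 ≤ qq := Nat.pos_of_ne_zero (by rintro rfl; exact Nat.not_prime_one hp4)
  have hm : 1 ≤ m := Nat.pos_of_ne_zero (by rintro rfl; simp at hodd)
  have hp3 : 3 ≤ p := by have := hp.two_le; omega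
  have hx : (3 : ℤ) ≤ (p : ℤ) ^ m := by exact_mod_cast hp3.trans (Nat.le_self_pow (by omega) p)
  obtain ⟨k, hk⟩ := exists_pellSol_eq (z := ((p : ℤ) ^ m) ^ qq) (y := |A|) hx (by positivity)
    (abs_nonneg A) (by rw [sq_abs]; linear_combination hA)
  obtain ⟨rfl, rfl, hE⟩ := eq_three_of_pellSol_fst_eq_prime_pow hp hp3 (by omega) hm
    (Nat.mul_pos hm hqq) ((congrArg Prod.fst hk).trans (pow_mul _ _ _).symm)
  exact hpn (by simp only [Prod.mk.injEq, true_and]; omega)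

/-- Let `p` be a prime with `p ≡ 3 (mod 4)`, let `n` be an odd integer greater than `1` with
`(p, n) ≠ (3, 5)`, let `d0` be the squarefree part of `1 − p^n` and `c` the positive integer
with `1 − p^n = c^2·d0`. Then for any prime `p4` dividing `n`, there are no integers `u`, `v`
and sign `ε ∈ {1, −1}` such that `(u + v·√d0)^p4 = ε·(1 + c·√d0)` in `ℤ[√d0]`. -/
theorem stmt_12 (p : ℕ) (hp : p.Prime) (hmod : p % 4 = 3)
    (n : ℕ) (hn : 1 < n) (hodd : Odd n) (hpn : (p, n) ≠ (3, 5))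
    (d0 : ℤ) (hd0 : Squarefree d0) (c : ℤ) (hc : 0 < c)
    (hfac : (1 : ℤ) - (p : ℤ) ^ n = c ^ 2 * d0)
    (p4 : ℕ) (hp4 : p4.Prime) (hdvd : p4 ∣ n) :
    ¬ ∃ (u v ε : ℤ), (ε = 1 ∨ ε = -1) ∧
      (⟨u, v⟩ : ℤ√d0) ^ p4 = (ε : ℤ√d0) * ⟨1, c⟩ :=
  stmt_12_general p hp hmod n hodd hpn d0 c hfac p4 hp4 hdvd
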